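/- arXiv:1708.09738 — 2 statements merged into one kernel-verified Lean document; each statement's English description precedes it below -/
import Mathlib

section
/- On ℝ, define for μ ∈ P_c(ℝ) the median B(μ) = sup{x : μ((−∞,x]) ≤ ½}, and the PVF V[μ] = μ ⊗ ν_x with ν_x = δ_{−1} for x < B(μ), ν_x = δ_{+1} for x > B(μ), and at x = B(μ) an appropriate convex combination of δ_{±1} splitting the atom so that total left-moving mass equals ½. Then V satisfies (H1) and (H3); in fact 𝒲(V[μ],V[ν]) = 0 for all μ, ν ∈ P_c(ℝ). -/
open MeasureTheory Metric Set Filter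
open scoped NNReal ENNReal Topology

noncomputable section

/-- Euclidean space ℝⁿ. -/
abbrev Euc (n : ℕ) := EuclideanSpace ℝ (Fin n)

namespace MDE

variable {X : Type*} [NormedAddCommGroup X] [InnerProductSpace ℝ X] [CompleteSpace X]
  [MeasurableSpace X] [BorelSpace X]

/-- `τ` is a transference plan (coupling) between `μ` and `ν`. -/
def IsCoupling {Y Z : Type*} [MeasurableSpace Y] [MeasurableSpace Z]
    (τ : Measure (Y × Z)) (μ : Measure Y) (ν : Measure Z) : Prop :=
  τ.map Prod.fst = μ ∧ τ.map Prod.snd = ν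

/-- The 1-Wasserstein distance. -/
def Wass {Y : Type*} [MeasurableSpace Y] [PseudoMetricSpace Y]
    (μ ν : Measure Y) : ℝ :=
  sInf { r | ∃ τ : Measure (Y × Y), IsCoupling τ μ ν ∧ r = ∫ p, dist p.1 p.2 ∂τ }

/-- `τ` is an optimal transference plan between `μ` and `ν` for the 1-Wasserstein cost. -/
def IsOptPlan {Y : Type*} [MeasurableSpace Y] [PseudoMetricSpace Y]
    (τ : Measure (Y × Y)) (μ ν : Measure Y) : Prop :=
  IsCoupling τ μ ν ∧ (∫ p, dist p.1 p.2 ∂τ) = Wass μ ν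

/-- The support of `μ` is contained in `s`. -/
def SuppIn {Y : Type*} [MeasurableSpace Y] (μ : Measure Y) (s : Set Y) : Prop :=
  μ sᶜ = 0

/-- Compactly supported probability measure. -/
def Pc (μ : Measure X) : Prop :=
  IsProbabilityMeasure μ ∧ ∃ R : ℝ, 0 ≤ R ∧ SuppIn μ (closedBall 0 R)

/-- A probability vector field: assigns to a measure on the base a measure on the tangent
bundle `X × X`. -/
abbrev PVF (X : Type*) [MeasurableSpace X] := Measure X → Measure (X × X)

/-- The defining property of a PVF: the first marginal of `V[μ]` is `μ`. -/
def IsPVF (V : PVF X) : Prop := ∀ μ : Measure X, Pc μ → (V μ).map Prod.fst = μ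

/-- (H1): support sublinearity of the fiber velocities. -/
def H1 (V : PVF X) (C : ℝ) : Prop :=
  ∀ μ : Measure X, Pc μ → ∀ R : ℝ, 0 ≤ R → SuppIn μ (closedBall 0 R) →
    SuppIn (V μ) {p : X × X | ‖p.2‖ ≤ C * (1 + R)}

/-- The quantity `𝒲`: Wasserstein distance of the fiber components over transference
plans that are optimal on the base. -/
def calW {Y : Type*} [MeasurableSpace Y] [PseudoMetricSpace Y]
    (W₁ W₂ : Measure (Y × Y)) : ℝ :=
  sInf { r | ∃ T : Measure ((Y × Y) × (Y × Y)), IsCoupling T W₁ W₂ ∧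
    IsOptPlan (T.map (fun p => (p.1.1, p.2.1))) (W₁.map Prod.fst) (W₂.map Prod.fst) ∧
    r = ∫ p, dist p.1.2 p.2.2 ∂T }

/-- (H2): continuity of `V` for the Wasserstein metrics. -/
def H2 (V : PVF X) : Prop :=
  ∀ μ : Measure X, Pc μ → ∀ ε > (0:ℝ), ∃ δ > (0:ℝ), ∀ ν : Measure X, Pc ν →
    Wass μ ν < δ → Wass (V μ) (V ν) < ε

/-- (H3): Lipschitz-type condition on `V` in terms of `𝒲`. -/
def H3 (V : PVF X) : Prop :=
  ∀ R > (0:ℝ), ∃ K > (0:ℝ), ∀ μ ν : Measure X, Pc μ → Pc ν →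
    SuppIn μ (closedBall 0 R) → SuppIn ν (closedBall 0 R) →
    calW (V μ) (V ν) ≤ K * Wass μ ν

/-- Weak solution of the MDE `μ̇ = V[μ]` on `[0,T]` (integral formulation). -/
def IsWeakSol (V : PVF X) (T : ℝ) (μ : ℝ → Measure X) : Prop :=
  ∀ f : X → ℝ, ContDiff ℝ (⊤ : ℕ∞) f → HasCompactSupport f →
    IntegrableOn (fun s => ∫ p : X × X, (inner ℝ (gradient f p.1) p.2 : ℝ) ∂(V (μ s)))
      (Icc 0 T) volume ∧
    ∀ t ∈ Icc (0:ℝ) T, ∫ x, f x ∂(μ t) =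
      ∫ x, f x ∂(μ 0) + ∫ s in Icc 0 t, ∫ p : X × X, (inner ℝ (gradient f p.1) p.2 : ℝ) ∂(V (μ s))

/-- Finite convex combination of Dirac deltas. -/
def IsDiracComb (μ : Measure X) : Prop :=
  ∃ (k : ℕ) (m : Fin k → ℝ≥0) (x : Fin k → X),
    (∀ i, 0 < m i) ∧ (∑ i, m i) = 1 ∧ μ = ∑ i, (m i : ℝ≥0∞) • Measure.dirac (x i)

/-- Lipschitz semigroup of solutions of `μ̇ = V[μ]` on `[0,T]` (Definition 4.3). -/
def IsLipschitzSemigroup (V : PVF X) (T : ℝ) (S : ℝ → Measure X → Measure X) : Prop :=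
  (∀ μ : Measure X, Pc μ → ∀ t ∈ Icc (0:ℝ) T, Pc (S t μ)) ∧
  (∀ μ : Measure X, Pc μ → S 0 μ = μ) ∧
  (∀ μ : Measure X, Pc μ → ∀ t s : ℝ, 0 ≤ t → 0 ≤ s → t + s ≤ T →
    S t (S s μ) = S (t + s) μ) ∧
  (∀ μ : Measure X, Pc μ → IsWeakSol V T (fun t => S t μ)) ∧
  ∃ C > (0:ℝ), ∀ R > (0:ℝ), ∃ CR > (0:ℝ), ∀ μ ν : Measure X, Pc μ → Pc ν →
    SuppIn μ (closedBall 0 R) → SuppIn ν (closedBall 0 R) →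
    ∀ t ∈ Icc (0:ℝ) T, ∀ s ∈ Icc (0:ℝ) T,
      SuppIn (S t μ) (closedBall 0 (Real.exp (C * t) * (R + 1))) ∧
      Wass (S t μ) (S t ν) ≤ Real.exp (CR * t) * Wass μ ν ∧
      Wass (S t μ) (S s μ) ≤ CR * |t - s|

/-- The PVF associated to a vector field `v`: `V^v[μ] = (id, v)#μ = μ ⊗ δ_{v(x)}`. -/
def Vvec (v : X → X) : PVF X := fun μ => μ.map (fun x => (x, v x))

end MDE
open scoped Classical
namespace MDE

/-- Discretization of a point of ℝⁿ onto the grid `hℤⁿ` (componentwise floor). -/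
def gridFloor {n : ℕ} (h : ℝ) (x : Euc n) : Euc n :=
  WithLp.toLp 2 (fun i => h * (⌊x i / h⌋ : ℝ))

/-- Discretization of a real number onto the grid `hℤ`. -/
def gridFloorR (h : ℝ) (x : ℝ) : ℝ := h * (⌊x / h⌋ : ℝ)

/-- Lattice Approximate Solution: `μ 0` is the space discretization of `μ₀` with mesh `1/N²`,
and `μ (ℓ+1)` is obtained by discretizing the velocities of `V[μ ℓ]` with mesh `1/N` and
moving the Dirac masses for a time step `1/N`. -/
def IsLAS {n : ℕ} (V : Measure (Euc n) → Measure (Euc n × Euc n)) (N : ℕ)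
    (μ₀ : Measure (Euc n)) (μ : ℕ → Measure (Euc n)) : Prop :=
  μ 0 = μ₀.map (gridFloor (1 / (N : ℝ) ^ 2)) ∧
  ∀ ℓ : ℕ, μ (ℓ + 1) =
    ((V (μ ℓ)).map (fun p => (p.1, gridFloor (1 / (N : ℝ)) p.2))).map
      (fun p => p.1 + (1 / (N : ℝ)) • p.2)

def IsLASR (V : Measure ℝ → Measure (ℝ × ℝ)) (N : ℕ)
    (μ₀ : Measure ℝ) (μ : ℕ → Measure ℝ) : Prop :=
  μ 0 = μ₀.map (gridFloorR (1 / (N : ℝ) ^ 2)) ∧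
  ∀ ℓ : ℕ, μ (ℓ + 1) =
    ((V (μ ℓ)).map (fun p => (p.1, gridFloorR (1 / (N : ℝ)) p.2))).map
      (fun p => p.1 + (1 / (N : ℝ)) * p.2)

/-- Fiber convolution of two measures on the tangent bundle with the same base marginal. -/
def fiberConv {n : ℕ} (W₁ W₂ : Measure (Euc n × Euc n)) : Measure (Euc n × Euc n) :=
  if h : IsFiniteMeasure W₁ ∧ IsFiniteMeasure W₂ then
    haveI := h.1
    haveI := h.2
    (W₁.map Prod.fst).bind (fun x =>
      ((W₁.condKernel x).prod (W₂.condKernel x)).map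
        (fun p : Euc n × Euc n => (x, p.1 + p.2)))
  else 0

/-- The median of a probability measure on ℝ. -/
def medB (μ : Measure ℝ) : ℝ := sSup {x : ℝ | μ (Set.Iic x) ≤ 1/2}

/-- The median-splitting PVF on ℝ: velocity `-1` left of the median, `+1` right of it,
and the atom at the median is split so that exactly half of the total mass moves left. -/
def medPVF : Measure ℝ → Measure (ℝ × ℝ) := fun μ =>
  (μ.restrict (Set.Iio (medB μ))).map (fun x => (x, (-1 : ℝ)))
  + (μ.restrict (Set.Ioi (medB μ))).map (fun x => (x, (1 : ℝ)))
  + (μ (Set.Iic (medB μ)) - 1/2) • Measure.dirac (medB μ, (1 : ℝ))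
  + (1/2 - μ (Set.Iio (medB μ))) • Measure.dirac (medB μ, (-1 : ℝ))

end MDE

open MDE


lemma iInter_Iic_eps (t : ℝ) : (⋂ n : ℕ, Iic (t + ((n:ℝ)+1)⁻¹)) = Iic t := by
  ext x
  simp only [mem_iInter, mem_Iic]
  constructor
  · intro h
    by_contra hx
    push_neg at hx
    obtain ⟨n, hn⟩ := exists_nat_one_div_lt (sub_pos.2 hx)
    have := h n
    rw [one_div] at hn
    linarith
  · intro h n
    have : (0:ℝ) < ((n:ℝ)+1)⁻¹ := by positivity
    linarith

lemma iUnion_Iic_eps (t : ℝ) : (⋃ n : ℕ, Iic (t - ((n:ℝ)+1)⁻¹)) = Iio t := by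
  ext x
  simp only [mem_iUnion, mem_Iic, mem_Iio]
  constructor
  · rintro ⟨n, hn⟩
    have : (0:ℝ) < ((n:ℝ)+1)⁻¹ := by positivity
    linarith
  · intro h
    obtain ⟨n, hn⟩ := exists_nat_one_div_lt (sub_pos.2 h)
    rw [one_div] at hn
    exact ⟨n, by linarith⟩

lemma eps_antitone : ∀ {n m : ℕ}, n ≤ m → ((m:ℝ)+1)⁻¹ ≤ ((n:ℝ)+1)⁻¹ := by
  intro n m h
  have : ((n:ℝ)+1) ≤ ((m:ℝ)+1) := by exact_mod_cast Nat.succ_le_succ h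
  exact inv_anti₀ (by positivity) this

lemma measure_Iic_iInf (μ : Measure ℝ) [IsFiniteMeasure μ] (t : ℝ) :
    μ (Iic t) = ⨅ n : ℕ, μ (Iic (t + ((n:ℝ)+1)⁻¹)) := by
  rw [← iInter_Iic_eps t]
  refine Directed.measure_iInter (fun n => measurableSet_Iic.nullMeasurableSet) ?_ ⟨0, measure_ne_top _ _⟩
  intro n m
  refine ⟨max n m, Iic_subset_Iic.2 ?_, Iic_subset_Iic.2 ?_⟩
  · have := eps_antitone (n:=n) (m:=max n m) (le_max_left n m); linarith
  · have := eps_antitone (n:=m) (m:=max n m) (le_max_right n m); linarith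

lemma measure_Iio_iSup (μ : Measure ℝ) (t : ℝ) :
    μ (Iio t) = ⨆ n : ℕ, μ (Iic (t - ((n:ℝ)+1)⁻¹)) := by
  rw [← iUnion_Iic_eps t]
  refine Directed.measure_iUnion ?_
  intro n m
  refine ⟨max n m, Iic_subset_Iic.2 ?_, Iic_subset_Iic.2 ?_⟩
  · have := eps_antitone (n:=n) (m:=max n m) (le_max_left n m); linarith
  · have := eps_antitone (n:=m) (m:=max n m) (le_max_right n m); linarith


section MedAux
open MDE

variable {μ : Measure ℝ} {R : ℝ}

lemma F_zero (hs : SuppIn μ (closedBall 0 R)) {t : ℝ} (ht : t < -R) : μ (Iic t) = 0 := by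
  refine measure_mono_null (fun x hx => ?_) hs
  simp only [mem_Iic] at hx
  simp only [mem_compl_iff, mem_closedBall, Real.dist_eq, sub_zero, not_le]
  have : -x ≤ |x| := neg_le_abs x
  linarith

lemma F_one (hpm : IsProbabilityMeasure μ) (hs : SuppIn μ (closedBall 0 R)) {t : ℝ}
    (ht : R ≤ t) : μ (Iic t) = 1 := by
  have h0 : μ (Ioi t) = 0 := by
    refine measure_mono_null (fun x hx => ?_) hs
    simp only [mem_Ioi] at hx
    simp only [mem_compl_iff, mem_closedBall, Real.dist_eq, sub_zero, not_le]
    have : x ≤ |x| := le_abs_self x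
    linarith
  have h := measure_add_measure_compl (μ := μ) (measurableSet_Iic (a := t))
  rw [compl_Iic, h0, add_zero, measure_univ] at h
  exact h

lemma half_lt_one' : (1/2 : ℝ≥0∞) < 1 :=
  ENNReal.half_lt_self one_ne_zero ENNReal.one_ne_top

lemma medS_mem (hR : 0 ≤ R) (hs : SuppIn μ (closedBall 0 R)) :
    (-R-1) ∈ {x : ℝ | μ (Iic x) ≤ 1/2} := by
  have h : μ (Iic (-R-1)) = 0 := F_zero hs (by linarith)
  simp [Set.mem_setOf_eq, h]

lemma medS_bdd (hpm : IsProbabilityMeasure μ) (hs : SuppIn μ (closedBall 0 R)) :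
    BddAbove {x : ℝ | μ (Iic x) ≤ 1/2} := by
  refine ⟨R, fun x hx => ?_⟩
  by_contra h
  push_neg at h
  rw [Set.mem_setOf_eq, F_one hpm hs h.le] at hx
  exact absurd hx (not_le.2 half_lt_one')

lemma medB_le (hpm : IsProbabilityMeasure μ) (hR : 0 ≤ R) (hs : SuppIn μ (closedBall 0 R)) :
    medB μ ≤ R := by
  refine csSup_le ⟨-R-1, medS_mem hR hs⟩ (fun x hx => ?_)
  by_contra h
  push_neg at h
  rw [Set.mem_setOf_eq, F_one hpm hs h.le] at hx
  exact absurd hx (not_le.2 half_lt_one')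

lemma F_le_half_of_lt (hR : 0 ≤ R) (hs : SuppIn μ (closedBall 0 R)) {t : ℝ}
    (ht : t < medB μ) : μ (Iic t) ≤ 1/2 := by
  have ht' : t < sSup {x : ℝ | μ (Iic x) ≤ 1/2} := ht
  obtain ⟨x, hx, htx⟩ := exists_lt_of_lt_csSup ⟨-R-1, medS_mem hR hs⟩ ht'
  exact le_trans (measure_mono (Iic_subset_Iic.2 htx.le)) hx

lemma Iio_medB_le_half (hR : 0 ≤ R) (hs : SuppIn μ (closedBall 0 R)) :
    μ (Iio (medB μ)) ≤ 1/2 := by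
  rw [measure_Iio_iSup]
  refine iSup_le fun n => F_le_half_of_lt hR hs ?_
  have : (0:ℝ) < ((n:ℝ)+1)⁻¹ := by positivity
  linarith

lemma half_lt_F_of_gt (hpm : IsProbabilityMeasure μ) (hs : SuppIn μ (closedBall 0 R)) {t : ℝ}
    (ht : medB μ < t) : 1/2 < μ (Iic t) := by
  by_contra h
  push_neg at h
  have : t ≤ medB μ := le_csSup (medS_bdd hpm hs) h
  linarith

lemma half_le_F_medB (hpm : IsProbabilityMeasure μ) (hs : SuppIn μ (closedBall 0 R)) :
    1/2 ≤ μ (Iic (medB μ)) := by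
  haveI : IsProbabilityMeasure μ := hpm
  rw [measure_Iic_iInf]
  refine le_iInf fun n => (half_lt_F_of_gt hpm hs ?_).le
  have : (0:ℝ) < ((n:ℝ)+1)⁻¹ := by positivity
  linarith

end MedAux

section QuantAux
open MDE

variable {μ : Measure ℝ} {R : ℝ}

/-- Quantile function. -/
def quantF (μ : Measure ℝ) (s : ℝ) : ℝ :=
  if s ∈ Set.Ioo (0:ℝ) 1 then sInf {x : ℝ | ENNReal.ofReal s ≤ μ (Set.Iic x)} else 0

lemma quant_set_nonempty (hpm : IsProbabilityMeasure μ) (hs : SuppIn μ (closedBall 0 R))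
    {s : ℝ} (hs1 : s ≤ 1) : ({x : ℝ | ENNReal.ofReal s ≤ μ (Set.Iic x)}).Nonempty := by
  refine ⟨R, ?_⟩
  rw [Set.mem_setOf_eq, F_one hpm hs le_rfl]
  exact ENNReal.ofReal_le_one.2 hs1

lemma quant_set_bddBelow (hs : SuppIn μ (closedBall 0 R)) {s : ℝ} (hs0 : 0 < s) :
    BddBelow {x : ℝ | ENNReal.ofReal s ≤ μ (Set.Iic x)} := by
  refine ⟨-R-1, fun x hx => ?_⟩
  by_contra h
  push_neg at h
  rw [Set.mem_setOf_eq, F_zero hs (by linarith)] at hx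
  simp only [nonpos_iff_eq_zero, ENNReal.ofReal_eq_zero] at hx
  linarith

lemma quantF_le_iff (hpm : IsProbabilityMeasure μ) (hs : SuppIn μ (closedBall 0 R))
    {s : ℝ} (hs01 : s ∈ Set.Ioo (0:ℝ) 1) (t : ℝ) :
    quantF μ s ≤ t ↔ ENNReal.ofReal s ≤ μ (Set.Iic t) := by
  haveI : IsProbabilityMeasure μ := hpm
  rw [quantF, if_pos hs01]
  constructor
  · intro h
    rw [measure_Iic_iInf]
    refine le_iInf fun n => ?_
    have hlt : sInf {x : ℝ | ENNReal.ofReal s ≤ μ (Set.Iic x)} < t + ((n:ℝ)+1)⁻¹ := by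
      have : (0:ℝ) < ((n:ℝ)+1)⁻¹ := by positivity
      linarith
    obtain ⟨x, hx, hxt⟩ := exists_lt_of_csInf_lt (quant_set_nonempty hpm hs hs01.2.le) hlt
    exact le_trans hx (measure_mono (Iic_subset_Iic.2 hxt.le))
  · intro h
    exact csInf_le (quant_set_bddBelow hs hs01.1) h

lemma quantF_measurable (hpm : IsProbabilityMeasure μ) (hs : SuppIn μ (closedBall 0 R)) :
    Measurable (quantF μ) := by
  refine measurable_of_Iic fun t => ?_
  have : quantF μ ⁻¹' (Iic t) =
      (Set.Ioo (0:ℝ) 1 ∩ Iic ((μ (Set.Iic t)).toReal)) ∪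
      ((Set.Ioo (0:ℝ) 1)ᶜ ∩ {_s : ℝ | (0:ℝ) ≤ t}) := by
    ext s
    by_cases h : s ∈ Set.Ioo (0:ℝ) 1
    · simp only [Set.mem_preimage, mem_Iic, Set.mem_union, Set.mem_inter_iff, h, true_and,
        Set.mem_compl_iff, not_true, false_and, or_false, Set.mem_setOf_eq]
      rw [quantF_le_iff hpm hs h t,
        ENNReal.ofReal_le_iff_le_toReal (measure_ne_top μ _)]
    · simp only [Set.mem_preimage, mem_Iic, Set.mem_union, Set.mem_inter_iff, h, false_and,
        Set.mem_compl_iff, not_false_iff, true_and, false_or, Set.mem_setOf_eq, quantF, if_neg h,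
        if_false]
  rw [this]
  exact ((measurableSet_Ioo.inter measurableSet_Iic).union
    (measurableSet_Ioo.compl.inter (MeasurableSet.const _)))

end QuantAux

section PushAux
open MDE

variable {μ : Measure ℝ} {R : ℝ}

lemma half_ennreal : (1/2 : ℝ≥0∞) = ENNReal.ofReal (1/2) := by
  rw [ENNReal.ofReal_div_of_pos (by norm_num)]
  norm_num

lemma vol_Ioo_inter_Iic (a b c : ℝ) :
    volume (Set.Ioo a b ∩ Set.Iic c) = ENNReal.ofReal (min c b - a) := by
  rcases le_or_gt b c with h | h
  · have e : Set.Ioo a b ∩ Set.Iic c = Set.Ioo a b :=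
      inter_eq_left.2 fun s hs => le_trans hs.2.le h
    rw [e, Real.volume_Ioo, min_eq_right h]
  · have e : Set.Ioo a b ∩ Set.Iic c = Set.Ioc a c := by
      ext s
      constructor
      · rintro ⟨⟨h1, _⟩, h3⟩; exact ⟨h1, h3⟩
      · rintro ⟨h1, h3⟩; exact ⟨⟨h1, lt_of_le_of_lt h3 h⟩, h3⟩
    rw [e, Real.volume_Ioc, min_eq_left h.le]

lemma map_quantF_Iic (hpm : IsProbabilityMeasure μ) (hs : SuppIn μ (closedBall 0 R))
    {a b : ℝ} (ha : 0 ≤ a) (hb : b ≤ 1) (t : ℝ) :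
    ((volume.restrict (Set.Ioo a b)).map (quantF μ)) (Set.Iic t)
      = ENNReal.ofReal (min (μ (Set.Iic t)).toReal b - a) := by
  rw [Measure.map_apply (quantF_measurable hpm hs) measurableSet_Iic,
    Measure.restrict_apply' measurableSet_Ioo]
  have e : quantF μ ⁻¹' Set.Iic t ∩ Set.Ioo a b
      = Set.Ioo a b ∩ Set.Iic ((μ (Set.Iic t)).toReal) := by
    ext s
    simp only [Set.mem_inter_iff, Set.mem_preimage, mem_Iic]
    constructor
    · rintro ⟨h1, h2⟩
      have h01 : s ∈ Set.Ioo (0:ℝ) 1 := ⟨lt_of_le_of_lt ha h2.1, lt_of_lt_of_le h2.2 hb⟩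
      rw [quantF_le_iff hpm hs h01 t, ENNReal.ofReal_le_iff_le_toReal (measure_ne_top μ _)] at h1
      exact ⟨h2, h1⟩
    · rintro ⟨h2, h1⟩
      have h01 : s ∈ Set.Ioo (0:ℝ) 1 := ⟨lt_of_le_of_lt ha h2.1, lt_of_lt_of_le h2.2 hb⟩
      rw [quantF_le_iff hpm hs h01 t, ENNReal.ofReal_le_iff_le_toReal (measure_ne_top μ _)]
      exact ⟨h1, h2⟩
  rw [e, vol_Ioo_inter_Iic]

lemma isFiniteMeasure_map_quantF (hpm : IsProbabilityMeasure μ)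
    (hs : SuppIn μ (closedBall 0 R)) (a b : ℝ) :
    IsFiniteMeasure ((volume.restrict (Set.Ioo a b)).map (quantF μ)) := by
  constructor
  rw [Measure.map_apply (quantF_measurable hpm hs) MeasurableSet.univ, Set.preimage_univ,
    Measure.restrict_apply_univ, Real.volume_Ioo]
  exact ENNReal.ofReal_lt_top

lemma map_quantF_full (hpm : IsProbabilityMeasure μ) (hs : SuppIn μ (closedBall 0 R)) :
    (volume.restrict (Set.Ioo (0:ℝ) 1)).map (quantF μ) = μ := by
  haveI : IsProbabilityMeasure μ := hpm
  haveI := isFiniteMeasure_map_quantF hpm hs 0 1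
  refine Measure.ext_of_Iic _ μ (fun t => ?_)
  rw [map_quantF_Iic hpm hs le_rfl le_rfl t, sub_zero]
  have h1 : (μ (Set.Iic t)).toReal ≤ 1 := by
    have h := prob_le_one (μ := μ) (s := Set.Iic t)
    have := ENNReal.toReal_mono ENNReal.one_ne_top h
    simpa using this
  rw [min_eq_left h1, ENNReal.ofReal_toReal (measure_ne_top μ _)]

lemma map_quantF_low (hpm : IsProbabilityMeasure μ) (hR : 0 ≤ R)
    (hs : SuppIn μ (closedBall 0 R)) :
    (volume.restrict (Set.Ioo (0:ℝ) (1/2))).map (quantF μ)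
      = μ.restrict (Set.Iio (medB μ))
        + (1/2 - μ (Set.Iio (medB μ))) • Measure.dirac (medB μ) := by
  haveI : IsProbabilityMeasure μ := hpm
  haveI := isFiniteMeasure_map_quantF hpm hs 0 (1/2)
  refine Measure.ext_of_Iic _ _ (fun t => ?_)
  rw [map_quantF_Iic hpm hs le_rfl (by norm_num) t, sub_zero,
    Measure.add_apply, Measure.restrict_apply' measurableSet_Iio, Measure.smul_apply,
    Measure.dirac_apply' _ measurableSet_Iic, smul_eq_mul]
  rcases lt_or_ge t (medB μ) with ht | ht
  · have hF : μ (Set.Iic t) ≤ 1/2 := F_le_half_of_lt hR hs ht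
    have hFr : (μ (Set.Iic t)).toReal ≤ 1/2 := by
      have := ENNReal.toReal_mono (by norm_num) hF
      simpa [half_ennreal, ENNReal.toReal_ofReal] using this
    rw [min_eq_left hFr, ENNReal.ofReal_toReal (measure_ne_top μ _)]
    have e1 : Set.Iic t ∩ Set.Iio (medB μ) = Set.Iic t :=
      inter_eq_left.2 fun x hx => lt_of_le_of_lt hx ht
    have e2 : Set.indicator (Set.Iic t) (1 : ℝ → ℝ≥0∞) (medB μ) = 0 :=
      Set.indicator_of_notMem (by simpa using ht) _
    rw [e1, e2, mul_zero, add_zero]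
  · have hF : (1:ℝ≥0∞)/2 ≤ μ (Set.Iic t) :=
      le_trans (half_le_F_medB hpm hs) (measure_mono (Iic_subset_Iic.2 ht))
    have hFr : (1:ℝ)/2 ≤ (μ (Set.Iic t)).toReal := by
      have := ENNReal.toReal_mono (measure_ne_top μ _) hF
      simpa [half_ennreal, ENNReal.toReal_ofReal] using this
    rw [min_eq_right hFr, ← half_ennreal]
    have e1 : Set.Iic t ∩ Set.Iio (medB μ) = Set.Iio (medB μ) :=
      inter_eq_right.2 fun x hx => le_trans (le_of_lt hx) ht
    have e2 : Set.indicator (Set.Iic t) (1 : ℝ → ℝ≥0∞) (medB μ) = (1 : ℝ → ℝ≥0∞) (medB μ) :=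
      Set.indicator_of_mem (by simpa using ht) _
    rw [Pi.one_apply] at e2
    rw [e1, e2, mul_one, add_tsub_cancel_of_le (Iio_medB_le_half hR hs)]

lemma Lm_add_Rm (hpm : IsProbabilityMeasure μ) (hR : 0 ≤ R) (hs : SuppIn μ (closedBall 0 R)) :
    (μ.restrict (Set.Iio (medB μ)) + (1/2 - μ (Set.Iio (medB μ))) • Measure.dirac (medB μ))
      + (μ.restrict (Set.Ioi (medB μ)) + (μ (Set.Iic (medB μ)) - 1/2) • Measure.dirac (medB μ))
      = μ := by
  haveI : IsProbabilityMeasure μ := hpm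
  set B := medB μ with hB
  have hdisj : Disjoint (Set.Iio B) {B} := by
    rw [Set.disjoint_singleton_right]; simp
  have hIic : μ (Set.Iic B) = μ (Set.Iio B) + μ {B} := by
    rw [← Set.Iio_union_right, measure_union hdisj (measurableSet_singleton B)]
  have hcoef : (1/2 - μ (Set.Iio B)) + (μ (Set.Iic B) - 1/2) = μ {B} := by
    rw [add_comm, tsub_add_tsub_cancel (half_le_F_medB hpm hs) (Iio_medB_le_half hR hs), hIic,
      ENNReal.add_sub_cancel_left (measure_ne_top μ _)]
  have step1 : (μ.restrict (Set.Iio B) + (1/2 - μ (Set.Iio B)) • Measure.dirac B)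
      + (μ.restrict (Set.Ioi B) + (μ (Set.Iic B) - 1/2) • Measure.dirac B)
      = (μ.restrict (Set.Iio B) + μ.restrict {B}) + μ.restrict (Set.Ioi B) := by
    rw [Measure.restrict_singleton, ← hcoef, add_smul]
    abel
  rw [step1, ← Measure.restrict_union hdisj (measurableSet_singleton B), Set.Iio_union_right,
    ← Measure.restrict_union ?_ measurableSet_Ioi, Set.Iic_union_Ioi, Measure.restrict_univ]
  rw [Set.disjoint_left]
  exact fun x hx hx2 => absurd hx2 (by simpa using hx)

lemma restrict_Ioo_split :
    volume.restrict (Set.Ioo (0:ℝ) 1)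
      = volume.restrict (Set.Ioo (0:ℝ) (1/2)) + volume.restrict (Set.Ioo (1/2:ℝ) 1) := by
  have hU : Set.Ioo (0:ℝ) (1/2) ∪ Set.Ioo (1/2:ℝ) 1 = Set.Ioo (0:ℝ) 1 \ {(1/2:ℝ)} := by
    ext x
    simp only [Set.mem_union, Set.mem_Ioo, Set.mem_diff, Set.mem_singleton_iff]
    constructor
    · rintro (⟨h1, h2⟩ | ⟨h1, h2⟩) <;> constructor <;> first | constructor | skip
      all_goals first | linarith | (intro h; rw [h] at *; linarith)
    · rintro ⟨⟨h1, h2⟩, h3⟩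
      rcases lt_trichotomy x (1/2) with h | h | h
      · exact Or.inl ⟨h1, h⟩
      · exact absurd h h3
      · exact Or.inr ⟨h, h2⟩
  have hdisj : Disjoint (Set.Ioo (0:ℝ) (1/2)) (Set.Ioo (1/2:ℝ) 1) :=
    Set.disjoint_left.2 fun x h1 h2 => absurd h1.2 (not_lt.2 h2.1.le)
  rw [← Measure.restrict_union hdisj measurableSet_Ioo, hU]
  refine (Measure.restrict_congr_set ?_).symm
  refine diff_ae_eq_self.2 ?_
  exact measure_mono_null (fun x hx => hx.2) Real.volume_singleton

lemma add_left_cancel_measure {α : Type*} [MeasurableSpace α] {a b c : Measure α}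
    [IsFiniteMeasure a] (h : a + b = a + c) : b = c := by
  ext s hs
  have h2 := congrArg (fun m : Measure α => m s) h
  simp only [Measure.add_apply] at h2
  exact (ENNReal.add_right_inj (measure_ne_top a s)).1 h2

lemma map_quantF_high (hpm : IsProbabilityMeasure μ) (hR : 0 ≤ R)
    (hs : SuppIn μ (closedBall 0 R)) :
    (volume.restrict (Set.Ioo (1/2:ℝ) 1)).map (quantF μ)
      = μ.restrict (Set.Ioi (medB μ))
        + (μ (Set.Iic (medB μ)) - 1/2) • Measure.dirac (medB μ) := by
  haveI : IsProbabilityMeasure μ := hpm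
  have hmap : μ = (volume.restrict (Set.Ioo (0:ℝ) (1/2))).map (quantF μ)
      + (volume.restrict (Set.Ioo (1/2:ℝ) 1)).map (quantF μ) := by
    rw [← Measure.map_add _ _ (quantF_measurable hpm hs), ← restrict_Ioo_split,
      map_quantF_full hpm hs]
  rw [map_quantF_low hpm hR hs] at hmap
  haveI : IsFiniteMeasure (μ.restrict (Set.Iio (medB μ))
      + (1/2 - μ (Set.Iio (medB μ))) • Measure.dirac (medB μ)) := by
    constructor
    rw [Measure.add_apply]
    refine ENNReal.add_lt_top.2 ⟨?_, ?_⟩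
    · exact lt_of_le_of_lt (Measure.restrict_apply_le _ _) (measure_lt_top μ _)
    · rw [Measure.smul_apply, smul_eq_mul]
      calc (1/2 - μ (Set.Iio (medB μ))) * Measure.dirac (medB μ) Set.univ
          ≤ 1/2 * 1 := by
            refine mul_le_mul' tsub_le_self ?_
            simp
        _ < ⊤ := by norm_num
  exact add_left_cancel_measure (hmap.symm.trans (Lm_add_Rm hpm hR hs).symm)

end PushAux

section PVFAux
open MDE

variable {μ : Measure ℝ} {R : ℝ}

lemma measurable_pairc (c : ℝ) : Measurable (fun x : ℝ => (x, c)) :=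
  measurable_id.prodMk measurable_const

lemma medPVF_eq (μ : Measure ℝ) :
    medPVF μ = (μ.restrict (Set.Iio (medB μ))
        + (1/2 - μ (Set.Iio (medB μ))) • Measure.dirac (medB μ)).map (fun x => (x, (-1:ℝ)))
      + (μ.restrict (Set.Ioi (medB μ))
        + (μ (Set.Iic (medB μ)) - 1/2) • Measure.dirac (medB μ)).map (fun x => (x, (1:ℝ))) := by
  rw [Measure.map_add _ _ (measurable_pairc (-1)), Measure.map_add _ _ (measurable_pairc 1),
    Measure.map_smul, Measure.map_smul, Measure.map_dirac' (measurable_pairc (-1)),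
    Measure.map_dirac' (measurable_pairc 1), medPVF]
  abel

lemma map_pair_fst (m : Measure ℝ) (c : ℝ) : (m.map (fun x => (x, c))).map Prod.fst = m := by
  rw [Measure.map_map measurable_fst (measurable_pairc c)]
  have : (Prod.fst ∘ fun x : ℝ => (x, c)) = id := rfl
  rw [this, Measure.map_id]

lemma fst_medPVF (hpm : IsProbabilityMeasure μ) (hR : 0 ≤ R)
    (hs : SuppIn μ (closedBall 0 R)) : (medPVF μ).map Prod.fst = μ := by
  rw [medPVF_eq, Measure.map_add _ _ measurable_fst, map_pair_fst, map_pair_fst]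
  exact Lm_add_Rm hpm hR hs

/-- The "band" between the two coordinates. -/
def bandSet : Set ((ℝ × ℝ) × ℝ) :=
  {z | (z.1.1 ≤ z.2 ∧ z.2 < z.1.2) ∨ (z.1.2 ≤ z.2 ∧ z.2 < z.1.1)}

lemma bandSet_measurable : MeasurableSet bandSet := by
  refine MeasurableSet.union ?_ ?_
  · exact (measurableSet_le measurable_fst.fst measurable_snd).inter
      (measurableSet_lt measurable_snd measurable_fst.snd)
  · exact (measurableSet_le measurable_fst.snd measurable_snd).inter
      (measurableSet_lt measurable_snd measurable_fst.fst)

lemma lint_t (p : ℝ × ℝ) :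
    ∫⁻ t, bandSet.indicator 1 (p, t) ∂volume = ENNReal.ofReal |p.1 - p.2| := by
  have e : (fun t => bandSet.indicator (1 : ((ℝ × ℝ) × ℝ) → ℝ≥0∞) (p, t))
      = (Set.Ico p.1 p.2 ∪ Set.Ico p.2 p.1).indicator 1 := by
    funext t
    by_cases h : (p.1 ≤ t ∧ t < p.2) ∨ (p.2 ≤ t ∧ t < p.1)
    · rw [Set.indicator_of_mem (show (p, t) ∈ bandSet from h),
        Set.indicator_of_mem (show t ∈ Set.Ico p.1 p.2 ∪ Set.Ico p.2 p.1 from h)]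
      rfl
    · rw [Set.indicator_of_notMem (show (p, t) ∉ bandSet from h),
        Set.indicator_of_notMem (show t ∉ Set.Ico p.1 p.2 ∪ Set.Ico p.2 p.1 from h)]
  rw [e, lintegral_indicator_one (measurableSet_Ico.union measurableSet_Ico)]
  rcases le_total p.1 p.2 with h | h
  · rw [Set.Ico_eq_empty (not_lt.2 h), Set.union_empty, Real.volume_Ico, abs_sub_comm,
      abs_of_nonneg (sub_nonneg.2 h)]
  · rw [Set.Ico_eq_empty (not_lt.2 h), Set.empty_union, Real.volume_Ico,
      abs_of_nonneg (sub_nonneg.2 h)]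

lemma sec1_measurable (t : ℝ) : MeasurableSet {p : ℝ × ℝ | p.1 ≤ t ∧ t < p.2} :=
  (measurableSet_le measurable_fst measurable_const).inter
    (measurableSet_lt measurable_const measurable_snd)

lemma sec2_measurable (t : ℝ) : MeasurableSet {p : ℝ × ℝ | p.2 ≤ t ∧ t < p.1} :=
  (measurableSet_le measurable_snd measurable_const).inter
    (measurableSet_lt measurable_const measurable_fst)

lemma lint_p (τ : Measure (ℝ × ℝ)) (t : ℝ) :
    ∫⁻ p, bandSet.indicator 1 (p, t) ∂τ
      = τ {p : ℝ × ℝ | p.1 ≤ t ∧ t < p.2} + τ {p : ℝ × ℝ | p.2 ≤ t ∧ t < p.1} := by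
  have e : (fun p : ℝ × ℝ => bandSet.indicator (1 : ((ℝ × ℝ) × ℝ) → ℝ≥0∞) (p, t))
      = ({p : ℝ × ℝ | p.1 ≤ t ∧ t < p.2} ∪ {p : ℝ × ℝ | p.2 ≤ t ∧ t < p.1}).indicator 1 := by
    funext p
    by_cases h : (p.1 ≤ t ∧ t < p.2) ∨ (p.2 ≤ t ∧ t < p.1)
    · rw [Set.indicator_of_mem (show (p, t) ∈ bandSet from h),
        Set.indicator_of_mem
          (show p ∈ {p : ℝ × ℝ | p.1 ≤ t ∧ t < p.2} ∪ {p : ℝ × ℝ | p.2 ≤ t ∧ t < p.1} from h)]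
      rfl
    · rw [Set.indicator_of_notMem (show (p, t) ∉ bandSet from h),
        Set.indicator_of_notMem
          (show p ∉ {p : ℝ × ℝ | p.1 ≤ t ∧ t < p.2} ∪ {p : ℝ × ℝ | p.2 ≤ t ∧ t < p.1} from h)]
  rw [e, lintegral_indicator_one ((sec1_measurable t).union (sec2_measurable t)),
    measure_union ?_ (sec2_measurable t)]
  exact Set.disjoint_left.2 fun p h1 h2 => absurd (lt_of_lt_of_le h1.2 h2.1) (lt_irrefl t)

lemma lint_dist_eq (τ : Measure (ℝ × ℝ)) [SFinite τ] :
    ∫⁻ p, ENNReal.ofReal |p.1 - p.2| ∂τ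
      = ∫⁻ t, (τ {p : ℝ × ℝ | p.1 ≤ t ∧ t < p.2}
          + τ {p : ℝ × ℝ | p.2 ≤ t ∧ t < p.1}) ∂volume := by
  have hmeas : Measurable fun z : (ℝ × ℝ) × ℝ =>
      bandSet.indicator (1 : ((ℝ × ℝ) × ℝ) → ℝ≥0∞) (z.1, z.2) :=
    (measurable_one.indicator bandSet_measurable).comp (measurable_fst.prodMk measurable_snd)
  calc ∫⁻ p, ENNReal.ofReal |p.1 - p.2| ∂τ
      = ∫⁻ p, ∫⁻ t, bandSet.indicator 1 (p, t) ∂volume ∂τ :=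
        (lintegral_congr fun p => (lint_t p).symm).symm ▸ rfl
    _ = ∫⁻ t, ∫⁻ p, bandSet.indicator 1 (p, t) ∂τ ∂volume :=
        lintegral_lintegral_swap hmeas.aemeasurable
    _ = _ := lintegral_congr fun t => lint_p τ t

end PVFAux

section OptAux
open MDE

lemma F_toReal_le_one {μ : Measure ℝ} (hpm : IsProbabilityMeasure μ) (t : ℝ) :
    (μ (Set.Iic t)).toReal ≤ 1 := by
  have h := ENNReal.toReal_mono ENNReal.one_ne_top (prob_le_one (μ := μ) (s := Set.Iic t))
  simpa using h

lemma quant_pre_band {α β : Measure ℝ} {Ra Rb : ℝ}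
    (hpa : IsProbabilityMeasure α) (hsa : SuppIn α (closedBall 0 Ra))
    (hpb : IsProbabilityMeasure β) (hsb : SuppIn β (closedBall 0 Rb)) (t : ℝ) :
    {s : ℝ | quantF α s ≤ t ∧ t < quantF β s} ∩ Set.Ioo (0:ℝ) 1
      = Set.Ioc ((β (Set.Iic t)).toReal) ((α (Set.Iic t)).toReal) \ {1} := by
  ext s
  simp only [Set.mem_inter_iff, Set.mem_setOf_eq, Set.mem_Ioo, Set.mem_diff, Set.mem_Ioc,
    Set.mem_singleton_iff]
  constructor
  · rintro ⟨⟨h1, h2⟩, h01⟩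
    rw [quantF_le_iff hpa hsa h01 t,
      ENNReal.ofReal_le_iff_le_toReal (measure_ne_top α _)] at h1
    have h2' : ¬ quantF β s ≤ t := not_le.2 h2
    rw [quantF_le_iff hpb hsb h01 t,
      ENNReal.ofReal_le_iff_le_toReal (measure_ne_top β _)] at h2'
    exact ⟨⟨not_le.1 h2', h1⟩, ne_of_lt h01.2⟩
  · rintro ⟨⟨h1, h2⟩, hne⟩
    have hs0 : 0 < s := lt_of_le_of_lt ENNReal.toReal_nonneg h1
    have hs1 : s < 1 := lt_of_le_of_ne (le_trans h2 (F_toReal_le_one hpa t)) hne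
    have h01 : s ∈ Set.Ioo (0:ℝ) 1 := ⟨hs0, hs1⟩
    refine ⟨⟨?_, ?_⟩, h01⟩
    · rw [quantF_le_iff hpa hsa h01 t,
        ENNReal.ofReal_le_iff_le_toReal (measure_ne_top α _)]
      exact h2
    · by_contra h
      push_neg at h
      rw [quantF_le_iff hpb hsb h01 t,
        ENNReal.ofReal_le_iff_le_toReal (measure_ne_top β _)] at h
      exact absurd h1 (not_lt.2 h)

lemma band_vol {α β : Measure ℝ} {Ra Rb : ℝ}
    (hpa : IsProbabilityMeasure α) (hsa : SuppIn α (closedBall 0 Ra))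
    (hpb : IsProbabilityMeasure β) (hsb : SuppIn β (closedBall 0 Rb)) (t : ℝ) :
    volume ({s : ℝ | quantF α s ≤ t ∧ t < quantF β s} ∩ Set.Ioo (0:ℝ) 1)
      = α (Set.Iic t) - β (Set.Iic t) := by
  rw [quant_pre_band hpa hsa hpb hsb t, measure_diff_null Real.volume_singleton,
    Real.volume_Ioc, ENNReal.ofReal_sub _ ENNReal.toReal_nonneg,
    ENNReal.ofReal_toReal (measure_ne_top α _), ENNReal.ofReal_toReal (measure_ne_top β _)]

end OptAux

section MainAux
open MDE

lemma integral_dist_abs (τ : Measure (ℝ × ℝ)) :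
    ∫ p, dist p.1 p.2 ∂τ = (∫⁻ p, ENNReal.ofReal |p.1 - p.2| ∂τ).toReal := by
  rw [integral_eq_lintegral_of_nonneg_ae (ae_of_all _ fun p => dist_nonneg)
    ((continuous_fst.dist continuous_snd).aestronglyMeasurable)]
  congr 1

lemma exists_good_T (μ ν : Measure ℝ) (hμ : Pc μ) (hν : Pc ν) :
    ∃ T : Measure ((ℝ × ℝ) × (ℝ × ℝ)), IsCoupling T (medPVF μ) (medPVF ν) ∧
      IsOptPlan (T.map (fun p => (p.1.1, p.2.1)))
        ((medPVF μ).map Prod.fst) ((medPVF ν).map Prod.fst) ∧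
      (∫ p, dist p.1.2 p.2.2 ∂T) = 0 := by
  obtain ⟨hpμ, Rμ, hRμ, hsμ⟩ := hμ
  obtain ⟨hpν, Rν, hRν, hsν⟩ := hν
  haveI : IsProbabilityMeasure μ := hpμ
  haveI : IsProbabilityMeasure ν := hpν
  have hqμ := quantF_measurable hpμ hsμ
  have hqν := quantF_measurable hpν hsν
  have hΦ : Measurable (fun s : ℝ => (quantF μ s, quantF ν s)) := hqμ.prodMk hqν
  -- the monotone coupling
  have hγ1 : ((volume.restrict (Set.Ioo (0:ℝ) 1)).map
      (fun s : ℝ => (quantF μ s, quantF ν s))).map Prod.fst = μ := by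
    rw [Measure.map_map measurable_fst hΦ]
    exact map_quantF_full hpμ hsμ
  have hγ2 : ((volume.restrict (Set.Ioo (0:ℝ) 1)).map
      (fun s : ℝ => (quantF μ s, quantF ν s))).map Prod.snd = ν := by
    rw [Measure.map_map measurable_snd hΦ]
    exact map_quantF_full hpν hsν
  haveI hγfin : IsFiniteMeasure ((volume.restrict (Set.Ioo (0:ℝ) 1)).map
      (fun s : ℝ => (quantF μ s, quantF ν s))) := by
    constructor
    rw [Measure.map_apply hΦ MeasurableSet.univ, Set.preimage_univ,
      Measure.restrict_apply_univ, Real.volume_Ioo]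
    exact ENNReal.ofReal_lt_top
  have hsec1 : ∀ t : ℝ, ((volume.restrict (Set.Ioo (0:ℝ) 1)).map
      (fun s : ℝ => (quantF μ s, quantF ν s))) {p : ℝ × ℝ | p.1 ≤ t ∧ t < p.2}
      = μ (Set.Iic t) - ν (Set.Iic t) := by
    intro t
    rw [Measure.map_apply hΦ (sec1_measurable t), Measure.restrict_apply' measurableSet_Ioo]
    exact band_vol hpμ hsμ hpν hsν t
  have hsec2 : ∀ t : ℝ, ((volume.restrict (Set.Ioo (0:ℝ) 1)).map
      (fun s : ℝ => (quantF μ s, quantF ν s))) {p : ℝ × ℝ | p.2 ≤ t ∧ t < p.1}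
      = ν (Set.Iic t) - μ (Set.Iic t) := by
    intro t
    rw [Measure.map_apply hΦ (sec2_measurable t), Measure.restrict_apply' measurableSet_Ioo]
    exact band_vol hpν hsν hpμ hsμ t
  have hγl : ∫⁻ p, ENNReal.ofReal |p.1 - p.2| ∂((volume.restrict (Set.Ioo (0:ℝ) 1)).map
        (fun s : ℝ => (quantF μ s, quantF ν s)))
      = ∫⁻ t, ((μ (Set.Iic t) - ν (Set.Iic t)) + (ν (Set.Iic t) - μ (Set.Iic t))) ∂volume := by
    rw [lint_dist_eq]
    exact lintegral_congr fun t => by rw [hsec1 t, hsec2 t]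
  -- facts about arbitrary couplings
  have hcoupl_int : ∀ τ : Measure (ℝ × ℝ), IsCoupling τ μ ν →
      ((∫⁻ p, ENNReal.ofReal |p.1 - p.2| ∂τ ≠ ⊤) ∧
        ∫⁻ p, ENNReal.ofReal |p.1 - p.2| ∂((volume.restrict (Set.Ioo (0:ℝ) 1)).map
          (fun s : ℝ => (quantF μ s, quantF ν s)))
          ≤ ∫⁻ p, ENNReal.ofReal |p.1 - p.2| ∂τ) := by
    rintro τ ⟨hτ1, hτ2⟩
    have hτuniv : τ Set.univ = 1 := by
      have h : (τ.map Prod.fst) Set.univ = μ Set.univ := by rw [hτ1]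
      rw [Measure.map_apply measurable_fst MeasurableSet.univ] at h
      simpa [measure_univ] using h
    haveI hτp : IsProbabilityMeasure τ := ⟨hτuniv⟩
    have hfst : ∀ s : Set ℝ, MeasurableSet s → τ (Prod.fst ⁻¹' s) = μ s := fun s hs => by
      rw [← hτ1, Measure.map_apply measurable_fst hs]
    have hsnd : ∀ s : Set ℝ, MeasurableSet s → τ (Prod.snd ⁻¹' s) = ν s := fun s hs => by
      rw [← hτ2, Measure.map_apply measurable_snd hs]
    have hb1 : ∀ᵐ p : ℝ × ℝ ∂τ, |p.1| ≤ Rμ := by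
      rw [ae_iff]
      have e : {p : ℝ × ℝ | ¬ |p.1| ≤ Rμ} = Prod.fst ⁻¹' (closedBall (0:ℝ) Rμ)ᶜ := by
        ext p
        simp [Real.dist_eq]
      rw [e, hfst _ measurableSet_closedBall.compl]
      exact hsμ
    have hb2 : ∀ᵐ p : ℝ × ℝ ∂τ, |p.2| ≤ Rν := by
      rw [ae_iff]
      have e : {p : ℝ × ℝ | ¬ |p.2| ≤ Rν} = Prod.snd ⁻¹' (closedBall (0:ℝ) Rν)ᶜ := by
        ext p
        simp [Real.dist_eq]
      rw [e, hsnd _ measurableSet_closedBall.compl]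
      exact hsν
    have hboundae : ∀ᵐ p : ℝ × ℝ ∂τ,
        ENNReal.ofReal |p.1 - p.2| ≤ ENNReal.ofReal (Rμ + Rν) := by
      filter_upwards [hb1, hb2] with p h1 h2
      apply ENNReal.ofReal_le_ofReal
      calc |p.1 - p.2| ≤ |p.1| + |p.2| := abs_sub _ _
        _ ≤ Rμ + Rν := add_le_add h1 h2
    refine ⟨?_, ?_⟩
    · refine ne_top_of_le_ne_top ?_ (lintegral_mono_ae hboundae)
      rw [lintegral_const, measure_univ, mul_one]
      exact ENNReal.ofReal_ne_top
    · rw [hγl, lint_dist_eq τ]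
      refine lintegral_mono fun t => ?_
      have h1 : μ (Set.Iic t) - ν (Set.Iic t) ≤ τ {p : ℝ × ℝ | p.1 ≤ t ∧ t < p.2} := by
        rw [tsub_le_iff_right]
        have hsub : Prod.fst ⁻¹' (Set.Iic t) ⊆
            {p : ℝ × ℝ | p.1 ≤ t ∧ t < p.2} ∪ Prod.snd ⁻¹' (Set.Iic t) := by
          intro p hp
          by_cases h : p.2 ≤ t
          · exact Or.inr h
          · exact Or.inl ⟨hp, not_le.1 h⟩
        calc μ (Set.Iic t) = τ (Prod.fst ⁻¹' Set.Iic t) := (hfst _ measurableSet_Iic).symm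
          _ ≤ τ ({p : ℝ × ℝ | p.1 ≤ t ∧ t < p.2} ∪ Prod.snd ⁻¹' (Set.Iic t)) :=
              measure_mono hsub
          _ ≤ τ {p : ℝ × ℝ | p.1 ≤ t ∧ t < p.2} + τ (Prod.snd ⁻¹' (Set.Iic t)) :=
              measure_union_le _ _
          _ = τ {p : ℝ × ℝ | p.1 ≤ t ∧ t < p.2} + ν (Set.Iic t) := by
              rw [hsnd _ measurableSet_Iic]
      have h2 : ν (Set.Iic t) - μ (Set.Iic t) ≤ τ {p : ℝ × ℝ | p.2 ≤ t ∧ t < p.1} := by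
        rw [tsub_le_iff_right]
        have hsub : Prod.snd ⁻¹' (Set.Iic t) ⊆
            {p : ℝ × ℝ | p.2 ≤ t ∧ t < p.1} ∪ Prod.fst ⁻¹' (Set.Iic t) := by
          intro p hp
          by_cases h : p.1 ≤ t
          · exact Or.inr h
          · exact Or.inl ⟨hp, not_le.1 h⟩
        calc ν (Set.Iic t) = τ (Prod.snd ⁻¹' Set.Iic t) := (hsnd _ measurableSet_Iic).symm
          _ ≤ τ ({p : ℝ × ℝ | p.2 ≤ t ∧ t < p.1} ∪ Prod.fst ⁻¹' (Set.Iic t)) :=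
              measure_mono hsub
          _ ≤ τ {p : ℝ × ℝ | p.2 ≤ t ∧ t < p.1} + τ (Prod.fst ⁻¹' (Set.Iic t)) :=
              measure_union_le _ _
          _ = τ {p : ℝ × ℝ | p.2 ≤ t ∧ t < p.1} + μ (Set.Iic t) := by
              rw [hfst _ measurableSet_Iic]
      exact add_le_add h1 h2
  -- γ is an optimal plan
  have hgmem : (∫ p, dist p.1 p.2 ∂((volume.restrict (Set.Ioo (0:ℝ) 1)).map
      (fun s : ℝ => (quantF μ s, quantF ν s)))) ∈
      {r : ℝ | ∃ τ : Measure (ℝ × ℝ), IsCoupling τ μ ν ∧ r = ∫ p, dist p.1 p.2 ∂τ} :=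
    ⟨_, ⟨hγ1, hγ2⟩, rfl⟩
  have hWnonneg : ∀ r ∈ {r : ℝ | ∃ τ : Measure (ℝ × ℝ), IsCoupling τ μ ν ∧
      r = ∫ p, dist p.1 p.2 ∂τ}, (0:ℝ) ≤ r := by
    rintro r ⟨τ, _, rfl⟩
    exact integral_nonneg fun p => dist_nonneg
  have hopt : IsOptPlan ((volume.restrict (Set.Ioo (0:ℝ) 1)).map
      (fun s : ℝ => (quantF μ s, quantF ν s))) μ ν := by
    refine ⟨⟨hγ1, hγ2⟩, le_antisymm (le_csInf ⟨_, hgmem⟩ ?_) (csInf_le ⟨0, hWnonneg⟩ hgmem)⟩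
    rintro r ⟨τ, hτc, rfl⟩
    obtain ⟨hfin, hle⟩ := hcoupl_int τ hτc
    rw [integral_dist_abs, integral_dist_abs]
    exact ENNReal.toReal_mono hfin hle
  -- the lifted coupling
  have hgm : Measurable (fun s : ℝ => ((quantF μ s, (-1:ℝ)), (quantF ν s, (-1:ℝ)))) :=
    (hqμ.prodMk measurable_const).prodMk (hqν.prodMk measurable_const)
  have hgp : Measurable (fun s : ℝ => ((quantF μ s, (1:ℝ)), (quantF ν s, (1:ℝ)))) :=
    (hqμ.prodMk measurable_const).prodMk (hqν.prodMk measurable_const)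
  have hproj : Measurable (fun p : (ℝ × ℝ) × (ℝ × ℝ) => (p.1.1, p.2.1)) :=
    measurable_fst.fst.prodMk measurable_snd.fst
  refine ⟨(volume.restrict (Set.Ioo (0:ℝ) (1/2))).map
      (fun s : ℝ => ((quantF μ s, (-1:ℝ)), (quantF ν s, (-1:ℝ))))
    + (volume.restrict (Set.Ioo (1/2:ℝ) 1)).map
      (fun s : ℝ => ((quantF μ s, (1:ℝ)), (quantF ν s, (1:ℝ)))), ⟨?_, ?_⟩, ?_, ?_⟩
  · rw [Measure.map_add _ _ measurable_fst, Measure.map_map measurable_fst hgm,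
      Measure.map_map measurable_fst hgp]
    have e1 : (Prod.fst ∘ fun s : ℝ => ((quantF μ s, (-1:ℝ)), (quantF ν s, (-1:ℝ))))
        = (fun x : ℝ => (x, (-1:ℝ))) ∘ quantF μ := rfl
    have e2 : (Prod.fst ∘ fun s : ℝ => ((quantF μ s, (1:ℝ)), (quantF ν s, (1:ℝ))))
        = (fun x : ℝ => (x, (1:ℝ))) ∘ quantF μ := rfl
    rw [e1, e2, ← Measure.map_map (measurable_pairc (-1)) hqμ,
      ← Measure.map_map (measurable_pairc 1) hqμ,
      map_quantF_low hpμ hRμ hsμ, map_quantF_high hpμ hRμ hsμ]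
    exact (medPVF_eq μ).symm
  · rw [Measure.map_add _ _ measurable_snd, Measure.map_map measurable_snd hgm,
      Measure.map_map measurable_snd hgp]
    have e1 : (Prod.snd ∘ fun s : ℝ => ((quantF μ s, (-1:ℝ)), (quantF ν s, (-1:ℝ))))
        = (fun x : ℝ => (x, (-1:ℝ))) ∘ quantF ν := rfl
    have e2 : (Prod.snd ∘ fun s : ℝ => ((quantF μ s, (1:ℝ)), (quantF ν s, (1:ℝ))))
        = (fun x : ℝ => (x, (1:ℝ))) ∘ quantF ν := rfl
    rw [e1, e2, ← Measure.map_map (measurable_pairc (-1)) hqν,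
      ← Measure.map_map (measurable_pairc 1) hqν,
      map_quantF_low hpν hRν hsν, map_quantF_high hpν hRν hsν]
    exact (medPVF_eq ν).symm
  · have hbase : ((volume.restrict (Set.Ioo (0:ℝ) (1/2))).map
        (fun s : ℝ => ((quantF μ s, (-1:ℝ)), (quantF ν s, (-1:ℝ))))
      + (volume.restrict (Set.Ioo (1/2:ℝ) 1)).map
        (fun s : ℝ => ((quantF μ s, (1:ℝ)), (quantF ν s, (1:ℝ))))).map
        (fun p : (ℝ × ℝ) × (ℝ × ℝ) => (p.1.1, p.2.1))
      = (volume.restrict (Set.Ioo (0:ℝ) 1)).map (fun s : ℝ => (quantF μ s, quantF ν s)) := by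
      rw [Measure.map_add _ _ hproj, Measure.map_map hproj hgm, Measure.map_map hproj hgp]
      have e1 : ((fun p : (ℝ × ℝ) × (ℝ × ℝ) => (p.1.1, p.2.1))
          ∘ fun s : ℝ => ((quantF μ s, (-1:ℝ)), (quantF ν s, (-1:ℝ))))
          = fun s : ℝ => (quantF μ s, quantF ν s) := rfl
      have e2 : ((fun p : (ℝ × ℝ) × (ℝ × ℝ) => (p.1.1, p.2.1))
          ∘ fun s : ℝ => ((quantF μ s, (1:ℝ)), (quantF ν s, (1:ℝ))))
          = fun s : ℝ => (quantF μ s, quantF ν s) := rfl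
      rw [e1, e2, ← Measure.map_add _ _ hΦ, ← restrict_Ioo_split]
    rw [hbase, fst_medPVF hpμ hRμ hsμ, fst_medPVF hpν hRν hsν]
    exact hopt
  · have hfc : Continuous fun p : (ℝ × ℝ) × (ℝ × ℝ) => dist p.1.2 p.2.2 :=
      Continuous.dist continuous_fst.snd continuous_snd.snd
    have hint1 : Integrable (fun p : (ℝ × ℝ) × (ℝ × ℝ) => dist p.1.2 p.2.2)
        ((volume.restrict (Set.Ioo (0:ℝ) (1/2))).map
          (fun s : ℝ => ((quantF μ s, (-1:ℝ)), (quantF ν s, (-1:ℝ))))) := by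
      rw [integrable_map_measure hfc.aestronglyMeasurable hgm.aemeasurable]
      have e : ((fun p : (ℝ × ℝ) × (ℝ × ℝ) => dist p.1.2 p.2.2)
          ∘ fun s : ℝ => ((quantF μ s, (-1:ℝ)), (quantF ν s, (-1:ℝ)))) = fun _ => (0:ℝ) := by
        funext s
        exact dist_self _
      rw [e]
      exact integrable_zero _ _ _
    have hint2 : Integrable (fun p : (ℝ × ℝ) × (ℝ × ℝ) => dist p.1.2 p.2.2)
        ((volume.restrict (Set.Ioo (1/2:ℝ) 1)).map
          (fun s : ℝ => ((quantF μ s, (1:ℝ)), (quantF ν s, (1:ℝ))))) := by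
      rw [integrable_map_measure hfc.aestronglyMeasurable hgp.aemeasurable]
      have e : ((fun p : (ℝ × ℝ) × (ℝ × ℝ) => dist p.1.2 p.2.2)
          ∘ fun s : ℝ => ((quantF μ s, (1:ℝ)), (quantF ν s, (1:ℝ)))) = fun _ => (0:ℝ) := by
        funext s
        exact dist_self _
      rw [e]
      exact integrable_zero _ _ _
    rw [integral_add_measure hint1 hint2,
      integral_map hgm.aemeasurable hfc.aestronglyMeasurable,
      integral_map hgp.aemeasurable hfc.aestronglyMeasurable]
    simp

end MainAux

/-- from Proposition 7.2: the median-splitting PVF on ℝ satisfies (H1)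
(with constant 1) and, in fact, `𝒲(V[μ],V[ν]) = 0` for all compactly supported probability
measures, so that (H3) holds trivially. -/
theorem medPVF_H1_and_calW_zero :
    H1 (X := ℝ) medPVF 1 ∧
    (∀ μ ν : Measure ℝ, Pc μ → Pc ν → calW (medPVF μ) (medPVF ν) = 0) ∧
    H3 (X := ℝ) medPVF := by
  have hWassNonneg : ∀ μ ν : Measure ℝ, (0:ℝ) ≤ Wass μ ν := by
    intro μ ν
    refine Real.sInf_nonneg ?_
    rintro r ⟨τ, _, rfl⟩
    exact integral_nonneg fun p => dist_nonneg
  have hcalW : ∀ μ ν : Measure ℝ, Pc μ → Pc ν → calW (medPVF μ) (medPVF ν) = 0 := by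
    intro μ ν hμ hν
    obtain ⟨T, hTc, hTopt, hTz⟩ := exists_good_T μ ν hμ hν
    have hmem : (0:ℝ) ∈ {r : ℝ | ∃ T' : Measure ((ℝ × ℝ) × (ℝ × ℝ)),
        IsCoupling T' (medPVF μ) (medPVF ν) ∧
        IsOptPlan (T'.map (fun p => (p.1.1, p.2.1)))
          ((medPVF μ).map Prod.fst) ((medPVF ν).map Prod.fst) ∧
        r = ∫ p, dist p.1.2 p.2.2 ∂T'} := ⟨T, hTc, hTopt, hTz.symm⟩
    have hnn : ∀ r ∈ {r : ℝ | ∃ T' : Measure ((ℝ × ℝ) × (ℝ × ℝ)),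
        IsCoupling T' (medPVF μ) (medPVF ν) ∧
        IsOptPlan (T'.map (fun p => (p.1.1, p.2.1)))
          ((medPVF μ).map Prod.fst) ((medPVF ν).map Prod.fst) ∧
        r = ∫ p, dist p.1.2 p.2.2 ∂T'}, (0:ℝ) ≤ r := by
      rintro r ⟨T', _, _, rfl⟩
      exact integral_nonneg fun p => dist_nonneg
    rw [calW]
    exact le_antisymm (csInf_le ⟨0, fun r hr => hnn r hr⟩ hmem) (le_csInf ⟨0, hmem⟩ hnn)
  refine ⟨?_, hcalW, ?_⟩
  · intro μ hμ R hR hs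
    have hmeas : MeasurableSet {p : ℝ × ℝ | ‖p.2‖ ≤ 1 * (1 + R)} :=
      measurableSet_le measurable_snd.norm measurable_const
    have hin : ∀ c : ℝ, ‖c‖ ≤ 1 → ∀ x : ℝ, (x, c) ∈ {p : ℝ × ℝ | ‖p.2‖ ≤ 1 * (1 + R)} := by
      intro c hc x
      simp only [Set.mem_setOf_eq]
      linarith
    have hpre : ∀ c : ℝ, ‖c‖ ≤ 1 →
        ((fun x : ℝ => (x, c)) ⁻¹' {p : ℝ × ℝ | ‖p.2‖ ≤ 1 * (1 + R)}ᶜ) = (∅ : Set ℝ) := by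
      intro c hc
      ext x
      simp only [Set.mem_preimage, Set.mem_compl_iff, Set.mem_empty_iff_false, iff_false,
        not_not]
      exact hin c hc x
    show (medPVF μ) {p : ℝ × ℝ | ‖p.2‖ ≤ 1 * (1 + R)}ᶜ = 0
    rw [medPVF]
    simp only [Measure.add_apply, Measure.smul_apply, smul_eq_mul]
    rw [Measure.map_apply (measurable_pairc (-1)) hmeas.compl,
      Measure.map_apply (measurable_pairc 1) hmeas.compl,
      hpre (-1) (by simp), hpre 1 (by simp),
      Measure.dirac_apply' _ hmeas.compl, Measure.dirac_apply' _ hmeas.compl,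
      Set.indicator_of_notMem (by simpa using hin 1 (by simp) (medB μ)) _,
      Set.indicator_of_notMem (by simpa using hin (-1) (by simp) (medB μ)) _]
    simp
  · intro R hR
    refine ⟨1, one_pos, fun μ ν hμ hν hsμ hsν => ?_⟩
    rw [hcalW μ ν hμ hν, one_mul]
    exact hWassNonneg μ ν

end
end

section
/- Weak solutions of MDEs are in general not unique: let V₁ be the median-splitting PVF on ℝ and V₂[μ] = μ ⊗ (½δ₁ + ½δ_{−1}). Then V₁[δ₀] = V₂[δ₀] = δ₀ ⊗ (½δ₁ + ½δ_{−1}), and both μ₁(t) = ½δ_t + ½δ_{−t} and μ₂(t) = δ₀ are weak solutions of μ̇ = V₁[μ] with μ(0) = δ₀ (μ₂ satisfies the weak formulation since ∫ ∇f(x)·v dV₁[δ₀](x,v) = ∇f(0)·(½·1 + ½·(−1)) = 0 for all test functions f). -/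
open MeasureTheory Metric Set Filter
open scoped NNReal ENNReal Topology

noncomputable section

open scoped Classical
open MDE


namespace MDE

lemma not_one_le_half : ¬ ((1:ℝ≥0∞) ≤ 1/2) := by
  rw [one_div]; exact not_le.mpr ENNReal.one_half_lt_one

lemma half_dirac_Iic (a x : ℝ) :
    ((1/2:ℝ≥0∞) • Measure.dirac a) (Iic x) = if a ≤ x then 1/2 else 0 := by
  rw [Measure.smul_apply, Measure.dirac_apply, Set.indicator_apply]
  by_cases h : a ≤ x <;> simp [h, mem_Iic]

lemma medB_dirac0 : medB (Measure.dirac 0) = 0 := by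
  have hs : {x : ℝ | (Measure.dirac 0) (Iic x) ≤ 1/2} = Iio 0 := by
    ext x
    rw [mem_setOf_eq, Measure.dirac_apply, Set.indicator_apply]
    by_cases h : (0:ℝ) ≤ x
    · simp only [mem_Iic, h, if_true, mem_Iio, Pi.one_apply]
      exact iff_of_false not_one_le_half (not_lt.mpr h)
    · simp only [mem_Iic, h, if_false, mem_Iio]
      exact iff_of_true (zero_le) (lt_of_not_ge h)
  rw [medB, hs, csSup_Iio]

lemma medB_pair (t : ℝ) (ht : 0 < t) :
    medB ((1/2:ℝ≥0∞) • Measure.dirac t + (1/2:ℝ≥0∞) • Measure.dirac (-t)) = t := by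
  have hs : {x : ℝ | ((1/2:ℝ≥0∞) • Measure.dirac t + (1/2:ℝ≥0∞) • Measure.dirac (-t)) (Iic x) ≤ 1/2}
      = Iio t := by
    ext x
    rw [mem_setOf_eq, Measure.add_apply, half_dirac_Iic, half_dirac_Iic, mem_Iio]
    rcases le_or_gt t x with h | h
    · have h2 : -t ≤ x := le_trans (by linarith) h
      rw [if_pos h, if_pos h2, ENNReal.add_halves]
      exact iff_of_false not_one_le_half (not_lt.mpr h)
    · rw [if_neg (not_le.mpr h)]
      refine iff_of_true ?_ h
      split_ifs <;> simp
  rw [medB, hs, csSup_Iio]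

lemma measurable_pairc (c : ℝ) : Measurable (fun x : ℝ => (x, c)) :=
  measurable_id.prodMk measurable_const

lemma medPVF_dirac0 : medPVF (Measure.dirac 0) =
    (1/2:ℝ≥0∞) • Measure.dirac ((0:ℝ), (1:ℝ)) + (1/2:ℝ≥0∞) • Measure.dirac ((0:ℝ), (-1:ℝ)) := by
  rw [medPVF, medB_dirac0]
  have h1 : (Measure.dirac (0:ℝ)).restrict (Iio 0) = 0 := by
    rw [restrict_dirac]; simp
  have h2 : (Measure.dirac (0:ℝ)).restrict (Ioi 0) = 0 := by
    rw [restrict_dirac]; simp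
  have h3 : (Measure.dirac (0:ℝ)) (Iic 0) = 1 := by
    rw [Measure.dirac_apply]; simp
  have h4 : (Measure.dirac (0:ℝ)) (Iio 0) = 0 := by
    rw [Measure.dirac_apply]; simp
  rw [h1, h2, h3, h4, Measure.map_zero, Measure.map_zero, tsub_zero,
    ENNReal.sub_eq_of_eq_add (by norm_num) (ENNReal.add_halves 1).symm]
  abel

lemma medPVF_pair (t : ℝ) (ht : 0 ≤ t) :
    medPVF ((1/2:ℝ≥0∞) • Measure.dirac t + (1/2:ℝ≥0∞) • Measure.dirac (-t)) =
    (1/2:ℝ≥0∞) • Measure.dirac (t, (1:ℝ)) + (1/2:ℝ≥0∞) • Measure.dirac (-t, (-1:ℝ)) := by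
  rcases eq_or_lt_of_le ht with rfl | ht
  · rw [neg_zero, ← add_smul, ENNReal.add_halves, one_smul, medPVF_dirac0]
  · rw [medPVF, medB_pair t ht]
    have hnt : ¬ (t < t) := lt_irrefl t
    have hmt : -t < t := by linarith
    have h1 : ((1/2:ℝ≥0∞) • Measure.dirac t + (1/2:ℝ≥0∞) • Measure.dirac (-t)).restrict (Iio t)
        = (1/2:ℝ≥0∞) • Measure.dirac (-t) := by
      rw [Measure.restrict_add, Measure.restrict_smul, Measure.restrict_smul,
        restrict_dirac, restrict_dirac]
      simp [hmt]
    have h2 : ((1/2:ℝ≥0∞) • Measure.dirac t + (1/2:ℝ≥0∞) • Measure.dirac (-t)).restrict (Ioi t)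
        = 0 := by
      rw [Measure.restrict_add, Measure.restrict_smul, Measure.restrict_smul,
        restrict_dirac, restrict_dirac]
      simp [mem_Ioi, hnt, asymm hmt]
    have h3 : ((1/2:ℝ≥0∞) • Measure.dirac t + (1/2:ℝ≥0∞) • Measure.dirac (-t)) (Iic t) = 1 := by
      rw [Measure.add_apply, half_dirac_Iic, half_dirac_Iic, if_pos (le_refl t),
        if_pos hmt.le, ENNReal.add_halves]
    have h4 : ((1/2:ℝ≥0∞) • Measure.dirac t + (1/2:ℝ≥0∞) • Measure.dirac (-t)) (Iio t) = 1/2 := by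
      rw [Measure.add_apply, Measure.smul_apply, Measure.smul_apply,
        Measure.dirac_apply, Measure.dirac_apply]
      simp [mem_Iio, hnt, hmt]
    rw [h1, h2, h3, h4, Measure.map_zero, tsub_self,
      ENNReal.sub_eq_of_eq_add (by norm_num) (ENNReal.add_halves 1).symm,
      Measure.map_smul, Measure.map_dirac' (measurable_pairc (-1)),
      zero_smul]
    abel

lemma integrable_half_dirac {α : Type*} [MeasurableSpace α] [MeasurableSingletonClass α]
    (g : α → ℝ) (hg : StronglyMeasurable g) (a b : α) :
    Integrable g ((1/2:ℝ≥0∞) • Measure.dirac a + (1/2:ℝ≥0∞) • Measure.dirac b) := by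
  have hd : ∀ c : α, Integrable g (Measure.dirac c) := fun c =>
    ⟨hg.aestronglyMeasurable, by simp [HasFiniteIntegral, lintegral_dirac]⟩
  have hne : (1/2:ℝ≥0∞) ≠ ⊤ := by simp
  exact ((hd a).smul_measure hne).add_measure ((hd b).smul_measure hne)

lemma integral_half_dirac {α : Type*} [MeasurableSpace α] [MeasurableSingletonClass α]
    (g : α → ℝ) (hg : StronglyMeasurable g) (a b : α) :
    ∫ x, g x ∂((1/2:ℝ≥0∞) • Measure.dirac a + (1/2:ℝ≥0∞) • Measure.dirac b)
      = (1/2) * g a + (1/2) * g b := by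
  have hne : (1/2:ℝ≥0∞) ≠ ⊤ := by simp
  have hd : ∀ c : α, Integrable g (Measure.dirac c) := fun c =>
    ⟨hg.aestronglyMeasurable, by simp [HasFiniteIntegral, lintegral_dirac]⟩
  rw [integral_add_measure ((hd a).smul_measure hne) ((hd b).smul_measure hne),
    integral_smul_measure, integral_smul_measure, integral_dirac, integral_dirac]
  norm_num

lemma inner_grad (f : ℝ → ℝ) (p : ℝ × ℝ) :
    (inner ℝ (gradient f p.1) p.2 : ℝ) = deriv f p.1 * p.2 := by
  simp [gradient_eq_deriv, RCLike.inner_apply, mul_comm]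

lemma sm_inner_grad (f : ℝ → ℝ) (hf : ContDiff ℝ (⊤ : ℕ∞) f) :
    StronglyMeasurable (fun p : ℝ × ℝ => (inner ℝ (gradient f p.1) p.2 : ℝ)) := by
  have : (fun p : ℝ × ℝ => (inner ℝ (gradient f p.1) p.2 : ℝ))
      = fun p : ℝ × ℝ => deriv f p.1 * p.2 := funext (inner_grad f)
  rw [this]
  exact (((hf.continuous_deriv (by simp)).comp continuous_fst).mul continuous_snd).stronglyMeasurable

end MDE

/-- Example 7.4: non-uniqueness of weak solutions. The median-splitting
PVF `V₁` and the constant PVF `V₂[μ] = μ ⊗ (½δ₁ + ½δ₋₁)` agree at `δ₀`, and both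
`μ₁(t) = ½δ_t + ½δ_{−t}` and `μ₂(t) = δ₀` are weak solutions of `μ̇ = V₁[μ]`, `μ(0) = δ₀`. -/
theorem mde_nonuniqueness (T : ℝ) (hT : 0 < T) :
    (medPVF (Measure.dirac 0) =
      (Measure.dirac (0:ℝ)).prod ((1/2 : ℝ≥0∞) • Measure.dirac (1:ℝ)
        + (1/2 : ℝ≥0∞) • Measure.dirac (-1:ℝ))) ∧
    (IsWeakSol (X := ℝ) medPVF T
      (fun t => (1/2 : ℝ≥0∞) • Measure.dirac t + (1/2 : ℝ≥0∞) • Measure.dirac (-t))) ∧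
    ((1/2 : ℝ≥0∞) • Measure.dirac (0:ℝ) + (1/2 : ℝ≥0∞) • Measure.dirac (-(0:ℝ))
      = Measure.dirac 0) ∧
    (IsWeakSol (X := ℝ) medPVF T (fun _ => Measure.dirac 0)) ∧
    ¬ (∀ t ∈ Icc (0:ℝ) T,
        ((1/2 : ℝ≥0∞) • Measure.dirac t + (1/2 : ℝ≥0∞) • Measure.dirac (-t) : Measure ℝ)
          = Measure.dirac 0) := by
  refine ⟨?_, ?_, ?_, ?_, ?_⟩
  · rw [MDE.medPVF_dirac0, Measure.dirac_prod, Measure.map_add, Measure.map_smul,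
      Measure.map_smul, Measure.map_dirac' measurable_prodMk_left,
      Measure.map_dirac' measurable_prodMk_left]
    exact measurable_prodMk_left
  · rw [IsWeakSol]
    intro f hf hfc
    have hgc : Continuous (fun s : ℝ => (1/2) * deriv f s - (1/2) * deriv f (-s)) := by
      have hd := hf.continuous_deriv (by simp)
      fun_prop
    have key : ∀ s : ℝ, 0 ≤ s →
        ∫ p : ℝ × ℝ, (inner ℝ (gradient f p.1) p.2 : ℝ)
          ∂(medPVF ((1/2:ℝ≥0∞) • Measure.dirac s + (1/2:ℝ≥0∞) • Measure.dirac (-s)))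
        = (1/2) * deriv f s - (1/2) * deriv f (-s) := by
      intro s hs
      rw [MDE.medPVF_pair s hs, MDE.integral_half_dirac _ (MDE.sm_inner_grad f hf),
        MDE.inner_grad, MDE.inner_grad]
      ring
    constructor
    · exact (hgc.integrableOn_Icc).congr_fun (fun s hs => (key s hs.1).symm) measurableSet_Icc
    · intro t ht
      rw [MDE.integral_half_dirac _ hf.continuous.stronglyMeasurable,
        MDE.integral_half_dirac _ hf.continuous.stronglyMeasurable,
        setIntegral_congr_fun measurableSet_Icc (fun s hs => key s hs.1),
        integral_Icc_eq_integral_Ioc, ← intervalIntegral.integral_of_le ht.1]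
      have hF : ∀ x ∈ uIcc 0 t, HasDerivAt (fun s => (1/2) * f s + (1/2) * f (-s))
          ((1/2) * deriv f x - (1/2) * deriv f (-x)) x := by
        intro x _
        have h1 : HasDerivAt f (deriv f x) x := (hf.differentiable (by simp) x).hasDerivAt
        have h2 : HasDerivAt (fun s : ℝ => f (-s)) (deriv f (-x) * (-1)) x :=
          ((hf.differentiable (by simp) (-x)).hasDerivAt).comp x (hasDerivAt_neg x)
        have h3 := (h1.const_mul (1/2:ℝ)).add (h2.const_mul (1/2:ℝ))
        exact h3.congr_deriv (by ring)
      rw [intervalIntegral.integral_eq_sub_of_hasDerivAt hF (hgc.intervalIntegrable 0 t)]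
      simp only [neg_zero]
      ring
  · rw [neg_zero, ← add_smul, ENNReal.add_halves, one_smul]
  · rw [IsWeakSol]
    intro f hf hfc
    have hc : ∫ p : ℝ × ℝ, (inner ℝ (gradient f p.1) p.2 : ℝ)
        ∂(medPVF (Measure.dirac 0)) = 0 := by
      rw [MDE.medPVF_dirac0, MDE.integral_half_dirac _ (MDE.sm_inner_grad f hf),
        MDE.inner_grad, MDE.inner_grad]
      ring
    constructor
    · exact (integrableOn_zero).congr_fun (fun s _ => hc.symm) measurableSet_Icc
    · intro t ht
      rw [setIntegral_congr_fun measurableSet_Icc (fun s _ => hc)]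
      simp
  · intro h
    have := congrArg (fun m : Measure ℝ => m {0}) (h T ⟨hT.le, le_refl T⟩)
    simp only [Measure.add_apply, Measure.smul_apply, Measure.dirac_apply,
      Set.indicator_apply, mem_singleton_iff, hT.ne', neg_eq_zero, if_false,
      Pi.one_apply, if_true, eq_self_iff_true] at this
    simp at this


end
end
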